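/- Let μ ∈ P₂(ℝ^d) and let G(α̃) = Var(α̃⋆μ)(V) + λ̄ᵀWλ̄ + 2∫(x−μ̄)ᵀS α̃(x) μ(dx) + 2μ̄ᵀTλ̄ + ρᵀ(C+C̄)λ̄ be defined on L²(μ; ℝ^m), where λ̄ := ∫α̃ dμ, and V, W are symmetric positive definite m×m matrices. Then G attains its minimum at α̃*(x) = −V⁻¹Sᵀ(x−μ̄) − W⁻¹Tᵀμ̄ − ½W⁻¹(C+C̄)ᵀρ, and the minimal value is G(α̃*) = −Var(μ)(S V⁻¹ Sᵀ) − μ̄ᵀ(T W⁻¹ Tᵀ)μ̄ − μ̄ᵀT W⁻¹(C+C̄)ᵀρ − ¼ρᵀ(C+C̄)W⁻¹(C+C̄)ᵀρ. -/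

import Mathlib

open MeasureTheory Matrix

/-- The `Λ`-weighted variance `Var(ν)(Λ) = ∫ yᵀΛy ν(dy) − ν̄ᵀΛν̄` of a measure on `ℝ^k`. -/
noncomputable def quadVar {k : ℕ} (ν : Measure (Fin k → ℝ)) (Λ : Matrix (Fin k) (Fin k) ℝ) : ℝ :=
  (∫ y, y ⬝ᵥ Λ.mulVec y ∂ν) - (∫ y, y ∂ν) ⬝ᵥ Λ.mulVec (∫ y, y ∂ν)

/-- The quadratic functional
`G(α̃) = Var(α̃⋆μ)(V) + λ̄ᵀWλ̄ + 2∫(x−μ̄)ᵀS α̃(x) μ(dx) + 2μ̄ᵀTλ̄ + ρᵀ(C+C̄)λ̄`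
on `L²(μ;ℝ^m)`, where `λ̄ = ∫ α̃ dμ` and `μ̄ = ∫ x μ(dx)`. -/
noncomputable def Gfun {d m : ℕ} (μ : Measure (Fin d → ℝ))
    (V W : Matrix (Fin m) (Fin m) ℝ) (S T C Cb : Matrix (Fin d) (Fin m) ℝ) (ρ : Fin d → ℝ)
    (α : (Fin d → ℝ) → Fin m → ℝ) : ℝ :=
  quadVar (μ.map α) V
    + (∫ x, α x ∂μ) ⬝ᵥ W.mulVec (∫ x, α x ∂μ)
    + 2 * ∫ x, (x - ∫ y, y ∂μ) ⬝ᵥ S.mulVec (α x) ∂μ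
    + 2 * ((∫ y, y ∂μ) ⬝ᵥ T.mulVec (∫ x, α x ∂μ))
    + ρ ⬝ᵥ (C + Cb).mulVec (∫ x, α x ∂μ)

/-!
With `λ̄ = ∫ α dμ` and `b = Tᵀμ̄ + ½(C+C̄)ᵀρ`, centering rewrites `G` as
`G(α) = ∫ [(α x − λ̄)ᵀV(α x − λ̄) + 2 (Sᵀ(x − μ̄))ᵀ(α x − λ̄)] μ(dx) + [λ̄ᵀWλ̄ + 2 bᵀλ̄]`;
the cross term loses its `λ̄`-part because `x − μ̄` has mean zero. Completing the square,
`vᵀVv + 2 bᵀv ≥ −bᵀV⁻¹b` with equality at `v = −V⁻¹b`, so the first bracket is minimized pointwise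
by `α x − λ̄ = −V⁻¹Sᵀ(x − μ̄)` and the second by `λ̄ = −W⁻¹b`; `α̃*` achieves both at once.
-/

namespace Matrix

lemma PosDef.isSymm {n : Type*} {V : Matrix n n ℝ} (hV : V.PosDef) : V.IsSymm :=
  isHermitian_iff_isSymm.mp hV.isHermitian

variable {R n k l : Type*} [Fintype n] [Fintype k] [Fintype l]

lemma transpose_mulVec_dotProduct [CommSemiring R] (M : Matrix k l R) (u : k → R) (v : l → R) :
    Mᵀ *ᵥ u ⬝ᵥ v = u ⬝ᵥ M *ᵥ v := by
  rw [dotProduct_comm, dotProduct_transpose_mulVec]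

lemma transpose_mulVec_dotProduct_mulVec [CommSemiring R] (M : Matrix k n R) (N : Matrix n n R)
    (P : Matrix l n R) (u : k → R) (w : l → R) :
    Mᵀ *ᵥ u ⬝ᵥ N *ᵥ (Pᵀ *ᵥ w) = u ⬝ᵥ (M * N * Pᵀ) *ᵥ w := by
  rw [transpose_mulVec_dotProduct, mulVec_mulVec, mulVec_mulVec, Matrix.mul_assoc]

lemma IsSymm.transpose_mulVec_add_dotProduct_mulVec [CommRing R] {N : Matrix n n R}
    (hN : N.IsSymm) (A : Matrix k n R) (B : Matrix l n R) (u : k → R) (w : l → R) :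
    (Aᵀ *ᵥ u + Bᵀ *ᵥ w) ⬝ᵥ N *ᵥ (Aᵀ *ᵥ u + Bᵀ *ᵥ w)
      = u ⬝ᵥ (A * N * Aᵀ) *ᵥ u + 2 * (u ⬝ᵥ (A * N * Bᵀ) *ᵥ w) + w ⬝ᵥ (B * N * Bᵀ) *ᵥ w := by
  have hcross : w ⬝ᵥ (B * N * Aᵀ) *ᵥ u = u ⬝ᵥ (A * N * Bᵀ) *ᵥ w := by
    rw [← transpose_mulVec_dotProduct, dotProduct_comm, transpose_mul, transpose_mul,
      transpose_transpose, hN.eq, Matrix.mul_assoc]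
  simp only [mulVec_add, dotProduct_add, add_dotProduct, transpose_mulVec_dotProduct_mulVec, hcross]
  ring

variable [DecidableEq n]

lemma IsSymm.add_inv_mulVec_dotProduct_mulVec [CommRing R] {V : Matrix n n R} (hV : V.IsSymm)
    (hV' : IsUnit V) (b v : n → R) :
    (v + V⁻¹ *ᵥ b) ⬝ᵥ V *ᵥ (v + V⁻¹ *ᵥ b)
      = v ⬝ᵥ V *ᵥ v + 2 * (b ⬝ᵥ v) + b ⬝ᵥ V⁻¹ *ᵥ b := by
  have hVinv : V *ᵥ (V⁻¹ *ᵥ b) = b := by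
    rw [mulVec_mulVec, mul_nonsing_inv V ((isUnit_iff_isUnit_det V).mp hV'), one_mulVec]
  have hcross : V⁻¹ *ᵥ b ⬝ᵥ V *ᵥ v = b ⬝ᵥ v := by
    rw [← transpose_mulVec_dotProduct, hV.eq, hVinv]
  rw [mulVec_add, dotProduct_add, add_dotProduct, add_dotProduct, hVinv, hcross,
    dotProduct_comm v b, dotProduct_comm (V⁻¹ *ᵥ b) b]
  ring

lemma IsSymm.neg_inv_mulVec_dotProduct_mulVec [CommRing R] {V : Matrix n n R} (hV : V.IsSymm)
    (hV' : IsUnit V) (b : n → R) :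
    -(V⁻¹ *ᵥ b) ⬝ᵥ V *ᵥ -(V⁻¹ *ᵥ b) + 2 * (b ⬝ᵥ -(V⁻¹ *ᵥ b)) = -(b ⬝ᵥ V⁻¹ *ᵥ b) := by
  have h := hV.add_inv_mulVec_dotProduct_mulVec hV' b (-(V⁻¹ *ᵥ b))
  rw [neg_add_cancel, mulVec_zero, dotProduct_zero] at h
  linear_combination -h

lemma PosDef.neg_dotProduct_inv_mulVec_le {V : Matrix n n ℝ} (hV : V.PosDef) (b v : n → ℝ) :
    -(b ⬝ᵥ V⁻¹ *ᵥ b) ≤ v ⬝ᵥ V *ᵥ v + 2 * (b ⬝ᵥ v) := by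
  have hsq := hV.posSemidef.dotProduct_mulVec_nonneg (v + V⁻¹ *ᵥ b)
  rw [star_trivial, hV.isSymm.add_inv_mulVec_dotProduct_mulVec hV.isUnit] at hsq
  linarith

end Matrix

namespace MeasureTheory

variable {X : Type*} [MeasurableSpace X] {μ : Measure X} {n k : Type*} [Fintype n] [Fintype k]

lemma memLp_two_of_lintegral_nnnorm_sq_lt_top {E : Type*} [NormedAddCommGroup E]
    {f : X → E} (hf : AEStronglyMeasurable f μ) (h : ∫⁻ x, (‖f x‖₊ : ENNReal) ^ 2 ∂μ < ⊤) :
    MemLp f 2 μ := by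
  refine ⟨hf, ?_⟩
  rw [eLpNorm_lt_top_iff_lintegral_rpow_enorm_lt_top two_ne_zero ENNReal.ofNat_ne_top]
  simpa [enorm_eq_nnnorm] using h

lemma MemLp.matrix_mulVec (M : Matrix k n ℝ) {p : ENNReal} {f : X → n → ℝ}
    (hf : MemLp f p μ) : MemLp (fun x => M *ᵥ f x) p μ :=
  (LinearMap.toContinuousLinearMap M.mulVecLin).comp_memLp' hf

lemma MemLp.integrable_dotProduct {f g : X → n → ℝ} (hf : MemLp f 2 μ)
    (hg : MemLp g 2 μ) : Integrable (fun x => f x ⬝ᵥ g x) μ :=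
  integrable_finsetSum _ fun i _ => (hf.eval i).integrable_mul (hg.eval i)

lemma integral_mulVec (M : Matrix k n ℝ) {f : X → n → ℝ} (hf : Integrable f μ) :
    ∫ x, M *ᵥ f x ∂μ = M *ᵥ ∫ x, f x ∂μ :=
  (LinearMap.toContinuousLinearMap M.mulVecLin).integral_comp_comm hf

lemma integral_const_dotProduct (b : n → ℝ) {f : X → n → ℝ} (hf : Integrable f μ) :
    ∫ x, b ⬝ᵥ f x ∂μ = b ⬝ᵥ ∫ x, f x ∂μ := by
  simp only [dotProduct]
  rw [integral_finsetSum _ fun i _ => (hf.eval i).const_mul (b i)]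
  simp only [integral_const_mul, eval_integral hf.eval]

lemma integral_sub_integral_self [IsProbabilityMeasure μ] {E : Type*} [NormedAddCommGroup E]
    [NormedSpace ℝ E] [CompleteSpace E] (f : X → E) : ∫ x, (f x - ∫ y, f y ∂μ) ∂μ = 0 := by
  simpa only [average_eq_integral] using integral_sub_average μ f

lemma integral_sub_integral_dotProduct_mulVec [IsProbabilityMeasure μ] (Λ : Matrix n n ℝ)
    {f : X → n → ℝ} (hf : MemLp f 2 μ) :
    ∫ x, (f x - ∫ y, f y ∂μ) ⬝ᵥ Λ *ᵥ (f x - ∫ y, f y ∂μ) ∂μ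
      = (∫ x, f x ⬝ᵥ Λ *ᵥ f x ∂μ) - (∫ x, f x ∂μ) ⬝ᵥ Λ *ᵥ ∫ x, f x ∂μ := by
  set c := ∫ x, f x ∂μ
  have hfc : MemLp (fun x => f x - c) 2 μ := hf.sub (memLp_const c)
  have hexpand : ∀ x, (f x - c) ⬝ᵥ Λ *ᵥ (f x - c)
      = f x ⬝ᵥ Λ *ᵥ f x - Λ *ᵥ c ⬝ᵥ (f x - c) - Λᵀ *ᵥ c ⬝ᵥ f x := by
    intro x
    rw [transpose_mulVec_dotProduct, dotProduct_comm _ (f x - c), mulVec_sub,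
      dotProduct_sub, sub_dotProduct, sub_dotProduct]
    ring
  have hq : Integrable (fun x => f x ⬝ᵥ Λ *ᵥ f x) μ :=
    hf.integrable_dotProduct (hf.matrix_mulVec Λ)
  have h1 : Integrable (fun x => Λ *ᵥ c ⬝ᵥ (f x - c)) μ := (memLp_const _).integrable_dotProduct hfc
  have h2 : Integrable (fun x => Λᵀ *ᵥ c ⬝ᵥ f x) μ := (memLp_const _).integrable_dotProduct hf
  simp_rw [hexpand]
  rw [integral_sub (f := fun x => f x ⬝ᵥ Λ *ᵥ f x - Λ *ᵥ c ⬝ᵥ (f x - c)) (hq.sub h1) h2,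
    integral_sub hq h1, integral_const_dotProduct _ (hfc.integrable one_le_two),
    integral_sub_integral_self, integral_const_dotProduct _ (hf.integrable one_le_two),
    dotProduct_zero, sub_zero, transpose_mulVec_dotProduct]

end MeasureTheory

lemma quadVar_map {X : Type*} [MeasurableSpace X] {μ : Measure X} [IsProbabilityMeasure μ] {k : ℕ}
    (Λ : Matrix (Fin k) (Fin k) ℝ) {f : X → Fin k → ℝ} (hf : MemLp f 2 μ) :
    quadVar (μ.map f) Λ = ∫ x, (f x - ∫ y, f y ∂μ) ⬝ᵥ Λ *ᵥ (f x - ∫ y, f y ∂μ) ∂μ := by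
  have hfm : AEMeasurable f μ := hf.aestronglyMeasurable.aemeasurable
  have hquad : Continuous fun y : Fin k → ℝ => y ⬝ᵥ Λ *ᵥ y := by fun_prop
  rw [integral_sub_integral_dotProduct_mulVec Λ hf, quadVar,
    integral_map hfm hquad.aestronglyMeasurable,
    integral_map (f := fun y => y) hfm aestronglyMeasurable_id]

lemma quadVar_eq_integral {k : ℕ} {ν : Measure (Fin k → ℝ)} [IsProbabilityMeasure ν]
    (Λ : Matrix (Fin k) (Fin k) ℝ) (hν : MemLp (fun y => y) 2 ν) :
    quadVar ν Λ = ∫ y, (y - ∫ z, z ∂ν) ⬝ᵥ Λ *ᵥ (y - ∫ z, z ∂ν) ∂ν := by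
  simpa using quadVar_map Λ hν

noncomputable def gfunLinearCoeff {d m : ℕ} (μ : Measure (Fin d → ℝ))
    (T C Cb : Matrix (Fin d) (Fin m) ℝ) (ρ : Fin d → ℝ) : Fin m → ℝ :=
  Tᵀ *ᵥ (∫ y, y ∂μ) + (C + Cb)ᵀ *ᵥ ((1 / 2 : ℝ) • ρ)

section Gfun
variable {d m : ℕ} {μ : Measure (Fin d → ℝ)} [IsProbabilityMeasure μ]
  {V W : Matrix (Fin m) (Fin m) ℝ} {S T C Cb : Matrix (Fin d) (Fin m) ℝ} {ρ : Fin d → ℝ}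

lemma Gfun_eq_integral_add (hμ : MemLp (fun x => x) 2 μ) {α : (Fin d → ℝ) → Fin m → ℝ}
    (hα : MemLp α 2 μ) :
    Gfun μ V W S T C Cb ρ α
      = (∫ x, ((α x - ∫ y, α y ∂μ) ⬝ᵥ V *ᵥ (α x - ∫ y, α y ∂μ)
            + 2 * (Sᵀ *ᵥ (x - ∫ y, y ∂μ) ⬝ᵥ (α x - ∫ y, α y ∂μ))) ∂μ)
        + ((∫ y, α y ∂μ) ⬝ᵥ W *ᵥ (∫ y, α y ∂μ)
            + 2 * (gfunLinearCoeff μ T C Cb ρ ⬝ᵥ ∫ y, α y ∂μ)) := by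
  rw [Gfun, quadVar_map V hα]
  set lam := ∫ y, α y ∂μ
  set μbar := ∫ y, y ∂μ
  have hxc : MemLp (fun x => x - μbar) 2 μ := hμ.sub (memLp_const μbar)
  have hαc : MemLp (fun x => α x - lam) 2 μ := hα.sub (memLp_const lam)
  have hcross : ∫ x, (x - μbar) ⬝ᵥ S *ᵥ α x ∂μ = ∫ x, Sᵀ *ᵥ (x - μbar) ⬝ᵥ (α x - lam) ∂μ := by
    have hsplit : ∀ x, (x - μbar) ⬝ᵥ S *ᵥ α x
        = Sᵀ *ᵥ (x - μbar) ⬝ᵥ (α x - lam) + S *ᵥ lam ⬝ᵥ (x - μbar) := by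
      intro x
      rw [dotProduct_sub, transpose_mulVec_dotProduct, transpose_mulVec_dotProduct,
        dotProduct_comm (S *ᵥ lam)]
      ring
    simp_rw [hsplit]
    rw [integral_add ((hxc.matrix_mulVec Sᵀ).integrable_dotProduct hαc)
      ((memLp_const _).integrable_dotProduct hxc),
      integral_const_dotProduct _ (hxc.integrable one_le_two), integral_sub_integral_self,
      dotProduct_zero, add_zero]
  rw [hcross,
    integral_add (hαc.integrable_dotProduct (hαc.matrix_mulVec V))
      (((hxc.matrix_mulVec Sᵀ).integrable_dotProduct hαc).const_mul 2),
    integral_const_mul, gfunLinearCoeff, add_dotProduct, transpose_mulVec_dotProduct,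
    transpose_mulVec_dotProduct, smul_dotProduct, smul_eq_mul]
  ring

lemma neg_quadVar_sub_le_Gfun (hμ : MemLp (fun x => x) 2 μ) (hV : V.PosDef) (hW : W.PosDef)
    {α : (Fin d → ℝ) → Fin m → ℝ} (hα : MemLp α 2 μ) :
    -quadVar μ (S * V⁻¹ * Sᵀ) - gfunLinearCoeff μ T C Cb ρ ⬝ᵥ W⁻¹ *ᵥ gfunLinearCoeff μ T C Cb ρ
      ≤ Gfun μ V W S T C Cb ρ α := by
  have hxc : MemLp (fun x => x - ∫ y, y ∂μ) 2 μ := hμ.sub (memLp_const _)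
  have hαc : MemLp (fun x => α x - ∫ y, α y ∂μ) 2 μ := hα.sub (memLp_const _)
  rw [Gfun_eq_integral_add hμ hα, quadVar_eq_integral _ hμ, ← integral_neg, sub_eq_add_neg]
  refine add_le_add (integral_mono ?_ ?_ fun x => ?_) (hW.neg_dotProduct_inv_mulVec_le _ _)
  · exact (hxc.integrable_dotProduct (hxc.matrix_mulVec _)).neg
  · exact (hαc.integrable_dotProduct (hαc.matrix_mulVec V)).add
      (((hxc.matrix_mulVec Sᵀ).integrable_dotProduct hαc).const_mul 2)
  · have hpt := hV.neg_dotProduct_inv_mulVec_le (Sᵀ *ᵥ (x - ∫ y, y ∂μ)) (α x - ∫ y, α y ∂μ)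
    rwa [transpose_mulVec_dotProduct_mulVec] at hpt

lemma Gfun_eq_neg_quadVar_sub (hμ : MemLp (fun x => x) 2 μ) (hV : V.PosDef) (hW : W.PosDef)
    {α : (Fin d → ℝ) → Fin m → ℝ}
    (hα : ∀ x, α x = -((V⁻¹ * Sᵀ) *ᵥ (x - ∫ y, y ∂μ)) - W⁻¹ *ᵥ gfunLinearCoeff μ T C Cb ρ) :
    Gfun μ V W S T C Cb ρ α
      = -quadVar μ (S * V⁻¹ * Sᵀ)
        - gfunLinearCoeff μ T C Cb ρ ⬝ᵥ W⁻¹ *ᵥ gfunLinearCoeff μ T C Cb ρ := by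
  obtain rfl := funext hα
  set b := gfunLinearCoeff μ T C Cb ρ
  have hxc : MemLp (fun x => x - ∫ y, y ∂μ) 2 μ := hμ.sub (memLp_const _)
  have hmem : MemLp (fun x => -((V⁻¹ * Sᵀ) *ᵥ (x - ∫ y, y ∂μ)) - W⁻¹ *ᵥ b) 2 μ :=
    (hxc.matrix_mulVec (V⁻¹ * Sᵀ)).neg.sub (memLp_const _)
  have hmean : ∫ x, (-((V⁻¹ * Sᵀ) *ᵥ (x - ∫ y, y ∂μ)) - W⁻¹ *ᵥ b) ∂μ = -(W⁻¹ *ᵥ b) := by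
    have hint : Integrable (fun x => -((V⁻¹ * Sᵀ) *ᵥ (x - ∫ y, y ∂μ))) μ :=
      ((hxc.matrix_mulVec (V⁻¹ * Sᵀ)).integrable one_le_two).neg
    rw [integral_sub hint (integrable_const _),
      integral_neg, integral_mulVec _ (hxc.integrable one_le_two), integral_sub_integral_self,
      mulVec_zero, neg_zero, integral_const, probReal_univ, one_smul, zero_sub]
  have hcentered : ∀ x, -((V⁻¹ * Sᵀ) *ᵥ (x - ∫ y, y ∂μ)) - W⁻¹ *ᵥ b - -(W⁻¹ *ᵥ b)
      = -(V⁻¹ *ᵥ (Sᵀ *ᵥ (x - ∫ y, y ∂μ))) := by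
    intro x
    rw [mulVec_mulVec]
    abel
  rw [Gfun_eq_integral_add hμ hmem, hmean]
  simp_rw [hcentered, hV.isSymm.neg_inv_mulVec_dotProduct_mulVec hV.isUnit,
    transpose_mulVec_dotProduct_mulVec]
  rw [integral_neg, ← quadVar_eq_integral _ hμ,
    hW.isSymm.neg_inv_mulVec_dotProduct_mulVec hW.isUnit]
  ring

end Gfun

/-- Minimization of the quadratic functional `G` on `L²(μ;ℝ^m)`: for `V`, `W` symmetric positive
definite, `G` attains its minimum at
`α̃*(x) = −V⁻¹Sᵀ(x−μ̄) − W⁻¹Tᵀμ̄ − ½W⁻¹(C+C̄)ᵀρ`, with minimal value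
`G(α̃*) = −Var(μ)(SV⁻¹Sᵀ) − μ̄ᵀTW⁻¹Tᵀμ̄ − μ̄ᵀTW⁻¹(C+C̄)ᵀρ − ¼ρᵀ(C+C̄)W⁻¹(C+C̄)ᵀρ`. -/
theorem Gfun_min {d m : ℕ} (μ : Measure (Fin d → ℝ)) [IsProbabilityMeasure μ]
    (hμ2 : ∫⁻ x, (‖x‖₊ : ENNReal) ^ 2 ∂μ < ⊤)
    (V W : Matrix (Fin m) (Fin m) ℝ) (hV : V.PosDef) (hW : W.PosDef)
    (S T C Cb : Matrix (Fin d) (Fin m) ℝ) (ρ : Fin d → ℝ)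
    (μbar : Fin d → ℝ) (hμbar : μbar = ∫ y, y ∂μ)
    (αstar : (Fin d → ℝ) → Fin m → ℝ)
    (hαstar : ∀ x, αstar x =
      -(V⁻¹ * Sᵀ).mulVec (x - μbar) - (W⁻¹ * Tᵀ).mulVec μbar
        - (1 / 2 : ℝ) • (W⁻¹ * (C + Cb)ᵀ).mulVec ρ) :
    (∀ α : (Fin d → ℝ) → Fin m → ℝ, Measurable α →
        (∫⁻ x, (‖α x‖₊ : ENNReal) ^ 2 ∂μ < ⊤) →
        Gfun μ V W S T C Cb ρ αstar ≤ Gfun μ V W S T C Cb ρ α)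
    ∧ Gfun μ V W S T C Cb ρ αstar
        = -quadVar μ (S * V⁻¹ * Sᵀ)
          - μbar ⬝ᵥ (T * W⁻¹ * Tᵀ).mulVec μbar
          - μbar ⬝ᵥ (T * W⁻¹ * (C + Cb)ᵀ).mulVec ρ
          - (1 / 4 : ℝ) * (ρ ⬝ᵥ ((C + Cb) * W⁻¹ * (C + Cb)ᵀ).mulVec ρ) := by
  subst hμbar
  have hμ : MemLp (fun x => x) 2 μ :=
    memLp_two_of_lintegral_nnnorm_sq_lt_top aestronglyMeasurable_id hμ2
  have hαstar' : ∀ x, αstar x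
      = -((V⁻¹ * Sᵀ) *ᵥ (x - ∫ y, y ∂μ)) - W⁻¹ *ᵥ gfunLinearCoeff μ T C Cb ρ := by
    intro x
    rw [hαstar, gfunLinearCoeff, mulVec_add, mulVec_mulVec, mulVec_mulVec, mulVec_smul, sub_sub]
  refine ⟨fun α hα hα2 => ?_, ?_⟩
  · rw [Gfun_eq_neg_quadVar_sub hμ hV hW hαstar']
    exact neg_quadVar_sub_le_Gfun hμ hV hW
      (memLp_two_of_lintegral_nnnorm_sq_lt_top hα.aestronglyMeasurable hα2)
  · rw [Gfun_eq_neg_quadVar_sub hμ hV hW hαstar', gfunLinearCoeff,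
      hW.inv.isSymm.transpose_mulVec_add_dotProduct_mulVec]
    simp only [mulVec_smul, dotProduct_smul, smul_dotProduct, smul_eq_mul]
    ring
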